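/- Let G=(V,E,w) be an edge-weighted graph with E≠∅ and let d be a positive real. If the density of the whole graph satisfies d(V) ≥ d, then there exists a nonempty subset S ⊆ V such that the induced subgraph G[S] is w_min·(⌊⌈d/w_max⌉/2⌋ + 1)-edge-connected and every vertex of G[S] has weighted degree strictly greater than d in G[S]. -/

import Mathlib

/-!
Call `T` good if `G[T]` is `k`-edge-connected and all its weighted degrees exceed `d`, and
suppose every edge set of weight `< k` has weight `≤ d`. By strong induction on `S`, a nonempty
`S` with `w(S) > d(|S| - 1)` contains a good set: delete a vertex of degree `≤ d`, or else `G[S]`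
is cut by edges of weight `≤ d` into two parts `A`, `B` with `w(S) ≤ w(A) + w(B) + d`, so one of
them inherits the density bound. For `k = w_min (t + 1)` with `t = ⌊⌈d / w_max⌉ / 2⌋`, an edge set
of weight `< k` has at most `t` edges, hence weight `≤ t · w_max ≤ d`.
-/

open Finset
open scoped Classical

noncomputable section

variable {V : Type*} [Fintype V] [DecidableEq V]

/-- The set of edges of `G` with both endpoints in `S`, i.e. the edge set `E(S)`
of the induced subgraph `G[S]`. -/
def edgesIn (G : SimpleGraph V) (S : Finset V) : Finset (Sym2 V) :=
  Finset.univ.filter (fun e => e ∈ G.edgeSet ∧ ∀ v ∈ e, v ∈ S)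

/-- `w(S)`: the total weight of the edges of the induced subgraph `G[S]`. -/
def wsum (G : SimpleGraph V) (w : Sym2 V → ℝ) (S : Finset V) : ℝ :=
  ∑ e ∈ edgesIn G S, w e

/-- The density `d(S) = w(S)/|S|` of the induced subgraph `G[S]`. -/
def density (G : SimpleGraph V) (w : Sym2 V → ℝ) (S : Finset V) : ℝ :=
  wsum G w S / S.card

/-- The weighted degree of a vertex `v` in the induced subgraph `G[S]`. -/
def wdeg (G : SimpleGraph V) (w : Sym2 V → ℝ) (S : Finset V) (v : V) : ℝ :=
  ∑ e ∈ (edgesIn G S).filter (fun e => v ∈ e), w e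

/-- `G[S]` is `k`-vertex-connected: it has at least `k+1` vertices, and deleting any set
of fewer than `k` vertices leaves a connected graph. -/
def VertexConnected (G : SimpleGraph V) (S : Finset V) (k : ℕ) : Prop :=
  k + 1 ≤ S.card ∧ ∀ D : Finset V, D ⊆ S → D.card < k →
    (G.induce ((S \ D : Finset V) : Set V)).Connected

/-- The edge-weighted graph `G[S]` is `k`-edge-connected: it is connected, and every set `F`
of its edges whose removal disconnects it has total weight at least `k`. -/
def EdgeConnected (G : SimpleGraph V) (w : Sym2 V → ℝ) (S : Finset V) (k : ℝ) : Prop :=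
  (G.induce (S : Set V)).Connected ∧
  ∀ F : Finset (Sym2 V), F ⊆ edgesIn G S →
    ¬ ((G.deleteEdges (F : Set (Sym2 V))).induce (S : Set V)).Connected →
    k ≤ ∑ e ∈ F, w e

theorem Nat.cast_ceil_div_two_le {R : Type*} [Semiring R] [LinearOrder R] [IsOrderedRing R]
    [FloorSemiring R] {x : R} (hx : 0 ≤ x) : ((⌈x⌉₊ / 2 : ℕ) : R) ≤ x := by
  have hceil := Nat.ceil_le_floor_add_one x
  exact (Nat.mono_cast (by omega : ⌈x⌉₊ / 2 ≤ ⌊x⌋₊)).trans (Nat.floor_le hx)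

theorem Finset.sum_le_mul_of_sum_lt_mul_succ {ι : Type*} {s : Finset ι} {f : ι → ℝ}
    {a b : ℝ} {t : ℕ} (ha : 0 < a) (hb : 0 ≤ b) (hf : ∀ i ∈ s, a ≤ f i ∧ f i ≤ b)
    (hs : ∑ i ∈ s, f i < a * (t + 1)) : ∑ i ∈ s, f i ≤ t * b := by
  have hlow : s.card * a ≤ ∑ i ∈ s, f i := by
    simpa using s.card_nsmul_le_sum f a fun i hi => (hf i hi).1
  have hcard : (s.card : ℝ) ≤ t := by
    have : (s.card : ℝ) < t + 1 := lt_of_mul_lt_mul_right (by linarith) ha.le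
    exact_mod_cast Nat.lt_succ_iff.1 (by exact_mod_cast this)
  calc ∑ i ∈ s, f i ≤ s.card * b := by simpa using s.sum_le_card_nsmul f b fun i hi => (hf i hi).2
    _ ≤ t * b := mul_le_mul_of_nonneg_right hcard hb

theorem Finset.sum_union_le_of_nonneg {ι M : Type*} [DecidableEq ι] [AddCommMonoid M]
    [PartialOrder M] [IsOrderedAddMonoid M] {s t : Finset ι} {f : ι → M}
    (h : ∀ i ∈ s ∩ t, 0 ≤ f i) : ∑ i ∈ s ∪ t, f i ≤ ∑ i ∈ s, f i + ∑ i ∈ t, f i := by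
  rw [← sum_union_inter]
  exact le_add_of_nonneg_right (sum_nonneg h)

variable {G : SimpleGraph V} {w : Sym2 V → ℝ}

@[simp]
theorem mem_edgesIn {S : Finset V} {e : Sym2 V} :
    e ∈ edgesIn G S ↔ e ∈ G.edgeSet ∧ ∀ v ∈ e, v ∈ S := by
  simp [edgesIn]

theorem edgesIn_mono {S T : Finset V} (h : S ⊆ T) : edgesIn G S ⊆ edgesIn G T := fun _ he =>
  mem_edgesIn.2 ⟨(mem_edgesIn.1 he).1, fun v hv => h ((mem_edgesIn.1 he).2 v hv)⟩

theorem edgesIn_singleton (v : V) : edgesIn G {v} = ∅ := by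
  ext e
  induction e using Sym2.ind with
  | _ a b =>
    simp only [mem_edgesIn, Sym2.mem_iff, mem_singleton, notMem_empty, iff_false, not_and]
    intro he h
    exact G.not_isDiag_of_mem_edgeSet he (Sym2.mk_isDiag_iff.2 ((h a (.inl rfl)).trans
      (h b (.inr rfl)).symm))

theorem edgesIn_erase (S : Finset V) (v : V) :
    edgesIn G (S.erase v) = (edgesIn G S).filter (fun e => v ∉ e) := by
  ext e
  simp only [mem_filter, mem_edgesIn, mem_erase]
  constructor
  · rintro ⟨he, h⟩
    exact ⟨⟨he, fun x hx => (h x hx).2⟩, fun hv => (h v hv).1 rfl⟩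
  · rintro ⟨⟨he, h⟩, hv⟩
    exact ⟨he, fun x hx => ⟨fun hxv => hv (hxv ▸ hx), h x hx⟩⟩

theorem wdeg_add_wsum_erase (S : Finset V) (v : V) :
    wdeg G w S v + wsum G w (S.erase v) = wsum G w S := by
  rw [wsum, wsum, wdeg, edgesIn_erase, sum_filter_add_sum_filter_not]

theorem edgesIn_subset_of_forall_adj_mem {S A : Finset V} {F : Finset (Sym2 V)}
    (hA : ∀ u v, u ∈ A → v ∈ S → G.Adj u v → s(u, v) ∉ F → v ∈ A) :
    edgesIn G S ⊆ edgesIn G A ∪ edgesIn G (S \ A) ∪ F := by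
  intro e he
  induction e using Sym2.ind with
  | _ u v =>
    simp only [mem_edgesIn, Sym2.mem_iff, forall_eq_or_imp, forall_eq, mem_union,
      mem_sdiff] at he ⊢
    obtain ⟨hadj, hu, hv⟩ := he
    by_cases huv : s(u, v) ∈ F
    · exact .inr huv
    by_cases huA : u ∈ A
    · exact .inl (.inl ⟨hadj, huA, hA u v huA hv hadj huv⟩)
    · have hvA : v ∉ A := fun hvA => huA (hA v u hvA hu hadj.symm (Sym2.eq_swap ▸ huv))
      exact .inl (.inr ⟨hadj, ⟨hu, huA⟩, hv, hvA⟩)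

theorem exists_wsum_le_of_not_connected (hw : ∀ e ∈ G.edgeSet, 0 ≤ w e) {S : Finset V}
    {F : Finset (Sym2 V)} (hF : F ⊆ edgesIn G S) (hS : S.Nonempty)
    (hdisc : ¬((G.deleteEdges (F : Set (Sym2 V))).induce (S : Set V)).Connected) :
    ∃ A ⊂ S, A.Nonempty ∧ wsum G w S ≤ wsum G w A + wsum G w (S \ A) + ∑ e ∈ F, w e := by
  set H := (G.deleteEdges (F : Set (Sym2 V))).induce (S : Set V)
  have : Nonempty (S : Set V) := hS.coe_sort
  obtain ⟨a, b, hab⟩ : ∃ a b, ¬H.Reachable a b := by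
    by_contra! h
    exact hdisc ⟨h⟩
  set A := S.filter fun z => ∃ hz : z ∈ S, H.Reachable a ⟨z, hz⟩
  have haA : (a : V) ∈ A := mem_filter.2 ⟨a.2, a.2, .rfl⟩
  have hbA : (b : V) ∉ A := fun hb => hab (mem_filter.1 hb).2.2
  have hclosed : ∀ u v, u ∈ A → v ∈ S → G.Adj u v → s(u, v) ∉ F → v ∈ A := by
    intro u v hu hv hadj huv
    obtain ⟨-, hu, hreach⟩ := mem_filter.1 hu
    exact mem_filter.2 ⟨hv, hv, hreach.trans (SimpleGraph.Adj.reachable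
      (show H.Adj ⟨u, hu⟩ ⟨v, hv⟩ from SimpleGraph.deleteEdges_adj.2 ⟨hadj, huv⟩))⟩
  have hnonneg : ∀ e ∈ edgesIn G A ∪ edgesIn G (S \ A) ∪ F, 0 ≤ w e := by
    intro e he
    simp only [mem_union] at he
    rcases he with (he | he) | he
    · exact hw e (mem_edgesIn.1 he).1
    · exact hw e (mem_edgesIn.1 he).1
    · exact hw e (mem_edgesIn.1 (hF he)).1
  refine ⟨A, ssubset_iff_of_subset (filter_subset _ _) |>.2 ⟨b, b.2, hbA⟩, ⟨a, haA⟩, ?_⟩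
  calc wsum G w S ≤ ∑ e ∈ edgesIn G A ∪ edgesIn G (S \ A) ∪ F, w e :=
        sum_le_sum_of_subset_of_nonneg (edgesIn_subset_of_forall_adj_mem hclosed)
          fun e he _ => hnonneg e he
    _ ≤ ∑ e ∈ edgesIn G A ∪ edgesIn G (S \ A), w e + ∑ e ∈ F, w e :=
        sum_union_le_of_nonneg fun e he => hnonneg e (mem_union_left _ (mem_inter.1 he).1)
    _ ≤ wsum G w A + wsum G w (S \ A) + ∑ e ∈ F, w e := by
        gcongr
        exact sum_union_le_of_nonneg fun e he => hnonneg e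
          (mem_union_left _ (mem_union_left _ (mem_inter.1 he).1))

theorem exists_light_cut_of_not_edgeConnected {d k : ℝ} (hd : 0 ≤ d)
    (hlight : ∀ F ⊆ edgesIn G univ, ∑ e ∈ F, w e < k → ∑ e ∈ F, w e ≤ d) {S : Finset V}
    (h : ¬EdgeConnected G w S k) :
    ∃ F ⊆ edgesIn G S, ∑ e ∈ F, w e ≤ d ∧
      ¬((G.deleteEdges (F : Set (Sym2 V))).induce (S : Set V)).Connected := by
  by_cases hconn : (G.induce (S : Set V)).Connected
  · obtain ⟨F, hFS, hdisc, hlt⟩ : ∃ F ⊆ edgesIn G S,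
        ¬((G.deleteEdges (F : Set (Sym2 V))).induce (S : Set V)).Connected ∧
          ∑ e ∈ F, w e < k := by
      simpa [EdgeConnected, hconn] using h
    exact ⟨F, hFS, hlight F (hFS.trans (edgesIn_mono (subset_univ S))) hlt, hdisc⟩
  · exact ⟨∅, empty_subset _, by simpa using hd, by simpa using hconn⟩

theorem exists_edgeConnected_of_mul_lt_wsum (hw : ∀ e ∈ G.edgeSet, 0 ≤ w e) {d k : ℝ}
    (hd : 0 ≤ d) (hlight : ∀ F ⊆ edgesIn G univ, ∑ e ∈ F, w e < k → ∑ e ∈ F, w e ≤ d)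
    (S : Finset V) (hS : S.Nonempty) (hdens : d * (S.card - 1) < wsum G w S) :
    ∃ T ⊆ S, T.Nonempty ∧ EdgeConnected G w T k ∧ ∀ v ∈ T, d < wdeg G w T v := by
  induction S using Finset.strongInduction with
  | H S ih =>
  by_cases hlow : ∃ v ∈ S, wdeg G w S v ≤ d
  · obtain ⟨v, hv, hvd⟩ := hlow
    have hSv : (S.erase v).Nonempty := by
      rw [nonempty_iff_ne_empty, Ne, erase_eq_empty_iff]
      rintro (rfl | rfl)
      · exact not_nonempty_empty hS
      · simp [wsum, edgesIn_singleton] at hdens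
    have hcard : ((S.erase v).card : ℝ) + 1 = S.card := by
      exact_mod_cast card_erase_add_one hv
    obtain ⟨T, hT, hT'⟩ := ih _ (erase_ssubset hv) hSv (by
      have := wdeg_add_wsum_erase (G := G) (w := w) S v
      rw [← hcard] at hdens
      linarith)
    exact ⟨T, hT.trans (erase_subset v S), hT'⟩
  push Not at hlow
  by_cases hconn : EdgeConnected G w S k
  · exact ⟨S, subset_rfl, hS, hconn, hlow⟩
  obtain ⟨F, hFS, hFd, hdisc⟩ := exists_light_cut_of_not_edgeConnected hd hlight hconn
  obtain ⟨A, hAS, hA, hsplit⟩ := exists_wsum_le_of_not_connected hw hFS hS hdisc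
  by_cases hAd : d * (A.card - 1) < wsum G w A
  · obtain ⟨T, hT, hT'⟩ := ih A hAS hA hAd
    exact ⟨T, hT.trans hAS.subset, hT'⟩
  · have hcard : (S.card : ℝ) = (S \ A).card + A.card := by
      exact_mod_cast (card_sdiff_add_card_eq_card hAS.subset).symm
    rw [hcard] at hdens
    obtain ⟨T, hT, hT'⟩ := ih (S \ A) (sdiff_ssubset hAS.subset hA) (sdiff_nonempty.2 hAS.2)
      (by linarith)
    exact ⟨T, hT.trans sdiff_subset, hT'⟩

/-- Corollary (edge-connectivity Mader): if the edge-weighted graph `G` has density at least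
`d > 0`, then there is a nonempty `S ⊆ V` such that `G[S]` is
`wmin·(⌊⌈d/wmax⌉/2⌋ + 1)`-edge-connected and every vertex of `G[S]` has weighted degree
greater than `d` in `G[S]`. -/
theorem mader_weighted_edge (G : SimpleGraph V) (w : Sym2 V → ℝ)
    (hE : (edgesIn G Finset.univ).Nonempty)
    (hw : ∀ e ∈ G.edgeSet, 0 < w e)
    (d : ℝ) (hd : 0 < d)
    (hdens : density G w Finset.univ ≥ d) :
    ∃ S : Finset V, S.Nonempty ∧
      EdgeConnected G w S
        ((edgesIn G Finset.univ).inf' hE w *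
          ((⌈d / (edgesIn G Finset.univ).sup' hE w⌉₊ / 2 + 1 : ℕ) : ℝ)) ∧
      ∀ v ∈ S, d < wdeg G w S v := by
  set wmax := (edgesIn G univ).sup' hE w
  set wmin := (edgesIn G univ).inf' hE w
  obtain ⟨e₀, he₀⟩ := hE
  have hwmin : 0 < wmin := (lt_inf'_iff _).2 fun e he => hw e (mem_edgesIn.1 he).1
  have hwmax : 0 < wmax := (hw e₀ (mem_edgesIn.1 he₀).1).trans_le (le_sup' w he₀)
  have hlight : ∀ F ⊆ edgesIn G univ,
      ∑ e ∈ F, w e < wmin * ((⌈d / wmax⌉₊ / 2 + 1 : ℕ) : ℝ) → ∑ e ∈ F, w e ≤ d := by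
    intro F hF hlt
    push_cast at hlt
    refine (sum_le_mul_of_sum_lt_mul_succ hwmin hwmax.le
      (fun e he => ⟨inf'_le w (hF he), le_sup' w (hF he)⟩) hlt).trans ?_
    exact (le_div_iff₀ hwmax).1 (Nat.cast_ceil_div_two_le (div_pos hd hwmax).le)
  have hV : (univ : Finset V).Nonempty := univ_nonempty_iff.2 (e₀.inductionOn fun a _ => ⟨a⟩)
  have hsum : d * ((univ : Finset V).card - 1) < wsum G w univ := by
    rw [density, ge_iff_le, le_div_iff₀ (by exact_mod_cast hV.card_pos)] at hdens
    linarith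
  obtain ⟨S, -, hS⟩ := exists_edgeConnected_of_mul_lt_wsum (fun e he => (hw e he).le) hd.le
    hlight univ hV hsum
  exact ⟨S, hS⟩
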